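/- arXiv:1705.08693 — 5 statements merged into one kernel-verified Lean document; each statement's English description precedes it below -/
import Mathlib

section
/- If V is C⁶ on ℝ \ {0}, the one-sided limits of V^{(k)} at 0 exist and are finite for 3 ≤ k ≤ 6, and x⁴ V^{(6)}(x) → 0 as |x| → +∞, and moreover lim_{x→±∞} V''(x) exist and are finite, then for each k with 3 ≤ k ≤ 6 one has x^{k-2} V^{(k)}(x) → 0 as |x| → +∞. -/
/-!
Put `g = V''`, which has a finite limit at `+∞` and satisfies `x⁴ g⁽⁴⁾(x) → 0`. Expanding `g`
by Taylor's formula at `x` with step `c x`, the Lagrange remainder is `O(ξ⁴ g⁽⁴⁾(ξ))` with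
`ξ ≥ x`, and `g((1 + c) x) - g(x) → 0`; hence
`c (x g') + c²/2 (x² g'') + c³/6 (x³ g''') → 0` for every `c > 0`. Taking `c = 1, 2, 3` and
inverting the Vandermonde system gives `x^j g⁽ʲ⁾(x) → 0` for `j = 1, 2, 3`. The limit at `-∞`
follows by applying this to `x ↦ V(-x)`.
-/

open Filter Topology Set Nat

theorem ContDiffOn.iteratedDeriv_of_isOpen {𝕜 F : Type*} [NontriviallyNormedField 𝕜]
    [NormedAddCommGroup F] [NormedSpace 𝕜 F] {f : 𝕜 → F} {U : Set 𝕜} {n m : ℕ}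
    (hf : ContDiffOn 𝕜 (n + m) f U) (hU : IsOpen U) : ContDiffOn 𝕜 n (iteratedDeriv m f) U := by
  induction m generalizing f with
  | zero => simpa using hf
  | succ m ih =>
    rw [iteratedDeriv_succ']
    exact ih (hf.deriv_of_isOpen hU (by push_cast; rw [add_assoc]))

theorem iteratedDeriv_iteratedDeriv {𝕜 F : Type*} [NontriviallyNormedField 𝕜]
    [NormedAddCommGroup F] [NormedSpace 𝕜 F] (m n : ℕ) (f : 𝕜 → F) :
    iteratedDeriv m (iteratedDeriv n f) = iteratedDeriv (m + n) f := by
  simp only [iteratedDeriv_eq_iterate, Function.iterate_add_apply]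

theorem taylor_mean_remainder_lagrange_iteratedDeriv_of_isOpen {f : ℝ → ℝ} {U : Set ℝ} {n : ℕ}
    (hU : IsOpen U) (hf : ContDiffOn ℝ (n + 1) f U) {x₀ x : ℝ} (hx : x₀ < x)
    (hsub : Icc x₀ x ⊆ U) :
    ∃ ξ ∈ Ioo x₀ x, f x = ∑ k ∈ Finset.range (n + 1), (x - x₀) ^ k / k ! * iteratedDeriv k f x₀
      + (x - x₀) ^ (n + 1) / (n + 1)! * iteratedDeriv (n + 1) f ξ := by
  obtain ⟨ξ, hξ, h⟩ := taylor_mean_remainder_lagrange_iteratedDeriv hx.ne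
    (hf.mono (by rwa [uIcc_of_le hx.le]))
  rw [uIoo_of_le hx.le] at hξ
  refine ⟨ξ, hξ, ?_⟩
  have hderiv : ∀ k ≤ n, iteratedDerivWithin k f (uIcc x₀ x) x₀ = iteratedDeriv k f x₀ := by
    intro k hk
    rw [uIcc_of_le hx.le]
    exact iteratedDerivWithin_eq_iteratedDeriv (uniqueDiffOn_Icc hx)
      ((hf.contDiffAt (hU.mem_nhds (hsub (left_mem_Icc.2 hx.le)))).of_le
        (by exact_mod_cast hk.trans n.le_succ))
      (left_mem_Icc.2 hx.le)
  rw [taylor_within_apply, Finset.sum_congr rfl fun k hk => by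
    rw [hderiv k (Finset.mem_range_succ_iff.1 hk)]] at h
  rw [sub_eq_iff_eq_add'] at h
  rw [h]
  simp only [smul_eq_mul]
  congr 1
  · exact Finset.sum_congr rfl fun k _ => by ring
  · ring

theorem tendsto_taylor_remainder_comp_mul_atTop {f : ℝ → ℝ} {n : ℕ}
    (hf : ContDiffOn ℝ (n + 1) f (Ioi 0))
    (hdecay : Tendsto (fun x => x ^ (n + 1) * iteratedDeriv (n + 1) f x) atTop (𝓝 0))
    {c : ℝ} (hc : 0 < c) :
    Tendsto (fun x => f ((1 + c) * x)
      - ∑ k ∈ Finset.range (n + 1), (c * x) ^ k / k ! * iteratedDeriv k f x) atTop (𝓝 0) := by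
  have htaylor : ∀ x, ∃ ξ, 0 < x → x ≤ ξ ∧ f ((1 + c) * x)
      - ∑ k ∈ Finset.range (n + 1), (c * x) ^ k / k ! * iteratedDeriv k f x
      = (c * x) ^ (n + 1) / (n + 1)! * iteratedDeriv (n + 1) f ξ := by
    intro x
    by_cases hx : 0 < x
    · obtain ⟨ξ, hξ, h⟩ := taylor_mean_remainder_lagrange_iteratedDeriv_of_isOpen isOpen_Ioi hf
        (by nlinarith : x < (1 + c) * x) fun y hy => hx.trans_le hy.1
      refine ⟨ξ, fun _ => ⟨hξ.1.le, ?_⟩⟩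
      rw [h, show (1 + c) * x - x = c * x by ring]
      ring
    · exact ⟨0, fun h => absurd h hx⟩
  choose ξ hξ using htaylor
  have hξ_atTop : Tendsto ξ atTop atTop :=
    tendsto_atTop_mono' atTop ((eventually_gt_atTop 0).mono fun x hx => (hξ x hx).1) tendsto_id
  have hbound : Tendsto (fun x => c ^ (n + 1) / (n + 1)! *
      ‖ξ x ^ (n + 1) * iteratedDeriv (n + 1) f (ξ x)‖) atTop (𝓝 0) := by
    simpa using (hdecay.comp hξ_atTop).norm.const_mul (c ^ (n + 1) / (n + 1)!)
  refine squeeze_zero_norm' ((eventually_gt_atTop 0).mono fun x hx => ?_) hbound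
  obtain ⟨hxξ, heq⟩ := hξ x hx
  rw [heq, norm_mul, norm_mul, norm_pow, Real.norm_of_nonneg (hx.le.trans hxξ),
    Real.norm_of_nonneg (by positivity), mul_pow, mul_div_right_comm, mul_assoc]
  gcongr

theorem tendsto_taylor_increment_three_atTop {g : ℝ → ℝ} {L : ℝ}
    (hg : ContDiffOn ℝ 4 g (Ioi 0)) (hlim : Tendsto g atTop (𝓝 L))
    (hdecay : Tendsto (fun x => x ^ 4 * iteratedDeriv 4 g x) atTop (𝓝 0)) {c : ℝ} (hc : 0 < c) :
    Tendsto (fun x => c * (x * iteratedDeriv 1 g x) + c ^ 2 / 2 * (x ^ 2 * iteratedDeriv 2 g x)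
      + c ^ 3 / 6 * (x ^ 3 * iteratedDeriv 3 g x)) atTop (𝓝 0) := by
  have hdiff : Tendsto (fun x => g ((1 + c) * x) - g x) atTop (𝓝 0) := by
    simpa using (hlim.comp (tendsto_id.const_mul_atTop (by linarith))).sub hlim
  have h := hdiff.sub (tendsto_taylor_remainder_comp_mul_atTop (n := 3) hg hdecay hc)
  rw [sub_zero] at h
  refine h.congr fun x => ?_
  simp only [Finset.sum_range_succ, Finset.sum_range_zero, iteratedDeriv_zero]
  norm_num [Nat.factorial]
  ring

theorem tendsto_pow_mul_iteratedDeriv_atTop {g : ℝ → ℝ} {L : ℝ}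
    (hg : ContDiffOn ℝ 4 g (Ioi 0)) (hlim : Tendsto g atTop (𝓝 L))
    (hdecay : Tendsto (fun x => x ^ 4 * iteratedDeriv 4 g x) atTop (𝓝 0)) :
    ∀ k, 1 ≤ k → k ≤ 4 → Tendsto (fun x => x ^ k * iteratedDeriv k g x) atTop (𝓝 0) := by
  have hP := fun c (hc : (0 : ℝ) < c) => tendsto_taylor_increment_three_atTop hg hlim hdecay hc
  have hP1 := hP 1 one_pos
  have hP2 := hP 2 two_pos
  have hP3 := hP 3 three_pos
  intro k hk1 hk4
  -- rows of the inverse of the Vandermonde system formed by `hP1`, `hP2`, `hP3`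
  interval_cases k
  · convert ((hP1.const_mul 3).sub (hP2.const_mul (3 / 2))).add (hP3.const_mul (1 / 3)) using 2
    · ring
    · simp
  · convert ((hP1.const_mul (-5)).add (hP2.const_mul 4)).sub hP3 using 2
    · ring
    · simp
  · convert ((hP1.const_mul 3).sub (hP2.const_mul 3)).add hP3 using 2
    · ring
    · simp
  · exact hdecay

theorem tendsto_pow_sub_two_mul_iteratedDeriv_atTop {V : ℝ → ℝ} {a : ℝ}
    (hV : ContDiffOn ℝ 6 V (Ioi 0)) (h2 : Tendsto (iteratedDeriv 2 V) atTop (𝓝 a))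
    (h6 : Tendsto (fun x => x ^ 4 * iteratedDeriv 6 V x) atTop (𝓝 0)) :
    ∀ k, 3 ≤ k → k ≤ 6 → Tendsto (fun x => x ^ (k - 2) * iteratedDeriv k V x) atTop (𝓝 0) := by
  intro k hk3 hk6
  obtain ⟨j, rfl⟩ : ∃ j, k = j + 2 := ⟨k - 2, by omega⟩
  rw [Nat.add_sub_cancel, ← iteratedDeriv_iteratedDeriv]
  refine tendsto_pow_mul_iteratedDeriv_atTop (hV.iteratedDeriv_of_isOpen (n := 4) isOpen_Ioi)
    h2 ?_ j (by omega) (by omega)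
  simpa only [iteratedDeriv_iteratedDeriv] using h6

theorem tendsto_pow_mul_iteratedDeriv_comp_neg_atTop_iff (f : ℝ → ℝ) (m k : ℕ) :
    Tendsto (fun x => x ^ m * iteratedDeriv k (fun y => f (-y)) x) atTop (𝓝 0) ↔
      Tendsto (fun x => x ^ m * iteratedDeriv k f x) atBot (𝓝 0) := by
  rw [← tendsto_comp_neg_atTop_iff, tendsto_zero_iff_norm_tendsto_zero]
  conv_rhs => rw [tendsto_zero_iff_norm_tendsto_zero]
  simp [iteratedDeriv_comp_neg, norm_mul, norm_pow]

theorem potential_intermediate_derivatives_decay_general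
    (V : ℝ → ℝ) (a b : ℝ)
    (hC6 : ContDiffOn ℝ 6 V {0}ᶜ)
    (hatop : Tendsto (iteratedDeriv 2 V) atTop (𝓝 a))
    (habot : Tendsto (iteratedDeriv 2 V) atBot (𝓝 b))
    (h6top : Tendsto (fun x => x ^ 4 * iteratedDeriv 6 V x) atTop (𝓝 0))
    (h6bot : Tendsto (fun x => x ^ 4 * iteratedDeriv 6 V x) atBot (𝓝 0)) :
    ∀ k : ℕ, 3 ≤ k → k ≤ 6 →
      Tendsto (fun x => x ^ (k - 2) * iteratedDeriv k V x) atTop (𝓝 0) ∧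
      Tendsto (fun x => x ^ (k - 2) * iteratedDeriv k V x) atBot (𝓝 0) := by
  intro k hk3 hk6
  have hpos : ContDiffOn ℝ 6 V (Ioi 0) := hC6.mono fun x hx => ne_of_gt hx
  have hneg : ContDiffOn ℝ 6 (fun x => V (-x)) (Ioi 0) :=
    hC6.comp contDiff_neg.contDiffOn fun x hx => neg_ne_zero.2 (ne_of_gt hx)
  have hatop_neg : Tendsto (iteratedDeriv 2 fun x => V (-x)) atTop (𝓝 b) :=
    (habot.comp tendsto_neg_atTop_atBot).congr fun x => by simp [iteratedDeriv_comp_neg]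
  have h6top_neg := (tendsto_pow_mul_iteratedDeriv_comp_neg_atTop_iff V 4 6).2 h6bot
  refine ⟨tendsto_pow_sub_two_mul_iteratedDeriv_atTop hpos hatop h6top k hk3 hk6, ?_⟩
  rw [← tendsto_pow_mul_iteratedDeriv_comp_neg_atTop_iff]
  exact tendsto_pow_sub_two_mul_iteratedDeriv_atTop hneg hatop_neg h6top_neg k hk3 hk6

/-- decay of intermediate derivatives of the potential at infinity. -/
theorem potential_intermediate_derivatives_decay
    (V : ℝ → ℝ) (a b : ℝ)
    (hC6 : ContDiffOn ℝ 6 V {0}ᶜ)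
    (hlim0 : ∀ k : ℕ, 3 ≤ k → k ≤ 6 →
      (∃ L : ℝ, Tendsto (iteratedDeriv k V) (𝓝[>] 0) (𝓝 L)) ∧
      (∃ L : ℝ, Tendsto (iteratedDeriv k V) (𝓝[<] 0) (𝓝 L)))
    (hatop : Tendsto (iteratedDeriv 2 V) atTop (𝓝 a))
    (habot : Tendsto (iteratedDeriv 2 V) atBot (𝓝 b))
    (h6top : Tendsto (fun x => x ^ 4 * iteratedDeriv 6 V x) atTop (𝓝 0))
    (h6bot : Tendsto (fun x => x ^ 4 * iteratedDeriv 6 V x) atBot (𝓝 0)) :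
    ∀ k : ℕ, 3 ≤ k → k ≤ 6 →
      Tendsto (fun x => x ^ (k - 2) * iteratedDeriv k V x) atTop (𝓝 0) ∧
      Tendsto (fun x => x ^ (k - 2) * iteratedDeriv k V x) atBot (𝓝 0) :=
  potential_intermediate_derivatives_decay_general V a b hC6 hatop habot h6top h6bot
end

section
/- Define W(x) = V(x)/V'(x) for x ≠ 0 and W(0) = 0. Under the stated hypotheses on V, the function W is continuously differentiable on ℝ with W'(0) = 1/2. -/
open Filter Topology

/-!
By L'Hôpital's rule on each side of `0`, with `L = V''(0±) ≠ 0`, we get `V'(x) ~ L x` and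
`V(x) ~ L x² / 2`. Hence `W = V / V' → 0` and `W' = 1 - V V'' / V'² → 1 - (L/2) L / L² = 1/2`
from both sides, whatever the two one-sided values of `L`. A function continuous at a point
whose derivative has a limit there is differentiable there with that derivative, so `W` is `C¹`.
Away from `0`, `V' ≠ 0` because `V'' > 0` makes `V'` strictly increasing.
-/

theorem contDiff_one_and_deriv_eq_of_tendsto_deriv {f f' : ℝ → ℝ} {x₀ a : ℝ}
    (hf : ContinuousAt f x₀) (hderiv : ∀ x ≠ x₀, HasDerivAt f (f' x) x)
    (hf' : ContinuousOn f' {x₀}ᶜ) (hlim : Tendsto f' (𝓝[≠] x₀) (𝓝 a)) :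
    ContDiff ℝ 1 f ∧ deriv f x₀ = a := by
  classical
  set g := Function.update f' x₀ a
  have hg : Continuous g := continuous_iff_continuousAt.2 fun x => by
    rcases eq_or_ne x x₀ with rfl | hx
    · exact continuousAt_update_same.2 hlim
    · exact (continuousAt_update_of_ne hx).2
        (hf'.continuousAt (isOpen_compl_singleton.mem_nhds hx))
  have hfg : ∀ x, HasDerivAt f (g x) x :=
    hasDerivAt_of_hasDerivAt_of_ne' (fun x hx => by simpa [g, hx] using hderiv x hx) hf
      hg.continuousAt
  have hderiv_eq : deriv f = g := funext fun x => (hfg x).deriv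
  exact ⟨contDiff_one_iff_deriv.2 ⟨fun x => (hfg x).differentiableAt, hderiv_eq ▸ hg⟩,
    by simp [hderiv_eq, g]⟩

theorem strictMono_of_deriv_pos_of_ne {f : ℝ → ℝ} {a : ℝ} (hf : Continuous f)
    (hf' : ∀ x ≠ a, 0 < deriv f x) : StrictMono f :=
  StrictMonoOn.Iic_union_Ici
    (strictMonoOn_of_deriv_pos (convex_Iic a) hf.continuousOn fun x hx =>
      hf' x (interior_Iic (a := a) ▸ hx).ne)
    (strictMonoOn_of_deriv_pos (convex_Ici a) hf.continuousOn fun x hx =>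
      hf' x (interior_Ici (a := a) ▸ hx).ne')

theorem tendsto_div_pow_succ_of_deriv {l : Filter ℝ} (hl : l = 𝓝[>] 0 ∨ l = 𝓝[<] 0)
    {f f' : ℝ → ℝ} {L : ℝ} (n : ℕ) (hff' : ∀ᶠ x in l, HasDerivAt f (f' x) x)
    (hf : Tendsto f l (𝓝 0)) (h : Tendsto (fun x => f' x / x ^ n) l (𝓝 L)) :
    Tendsto (fun x => f x / x ^ (n + 1)) l (𝓝 (L / (n + 1))) := by
  have hl0 : l ≤ 𝓝[≠] 0 := by
    rcases hl with rfl | rfl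
    exacts [nhdsGT_le_nhdsNE 0, nhdsLT_le_nhdsNE 0]
  have hpow : ∀ x : ℝ, HasDerivAt (· ^ (n + 1)) ((n + 1) * x ^ n) x := fun x => by
    simpa using hasDerivAt_pow (n + 1) x
  have hpow_ne : ∀ᶠ x in l, ((n : ℝ) + 1) * x ^ n ≠ 0 :=
    (eventually_mem_nhdsWithin.filter_mono hl0).mono fun x (hx : x ≠ 0) =>
      mul_ne_zero (by positivity) (pow_ne_zero n hx)
  have hpow_lim : Tendsto (· ^ (n + 1)) l (𝓝 (0 : ℝ)) :=
    ((continuous_pow (n + 1)).tendsto' 0 0 (by simp)).mono_left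
      (hl0.trans nhdsWithin_le_nhds)
  have hdiv : Tendsto (fun x => f' x / ((n + 1) * x ^ n)) l (𝓝 (L / (n + 1))) := by
    simpa only [div_mul_eq_div_div_swap] using h.div_const ((n : ℝ) + 1)
  rcases hl with rfl | rfl
  · exact HasDerivAt.lhopital_zero_nhdsGT hff' (.of_forall hpow) hpow_ne hf hpow_lim hdiv
  · exact HasDerivAt.lhopital_zero_nhdsLT hff' (.of_forall hpow) hpow_ne hf hpow_lim hdiv

theorem tendsto_div_and_mul_div_sq_of_tendsto_div_pow {l : Filter ℝ} (hl : l ≤ 𝓝[≠] 0)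
    {f g h : ℝ → ℝ} {L : ℝ} (hL : L ≠ 0)
    (hf : Tendsto (fun x => f x / x ^ 2) l (𝓝 (L / 2)))
    (hg : Tendsto (fun x => g x / x) l (𝓝 L)) (hh : Tendsto h l (𝓝 L)) :
    Tendsto (fun x => f x / g x) l (𝓝 0) ∧
      Tendsto (fun x => f x * h x / g x ^ 2) l (𝓝 (1 / 2)) := by
  have hx : Tendsto id l (𝓝 0) := tendsto_id.mono_left (hl.trans nhdsWithin_le_nhds)
  have hne : ∀ᶠ x in l, x ≠ 0 ∧ g x ≠ 0 :=
    (eventually_mem_nhdsWithin.filter_mono hl).and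
      ((hg.eventually_ne hL).mono fun x hx => (div_ne_zero_iff.1 hx).1)
  constructor
  · have key := (hx.mul hf).div hg hL
    rw [zero_mul, zero_div] at key
    refine key.congr' (hne.mono fun x ⟨hx0, hgx⟩ => ?_)
    simp only [Pi.div_apply, id]
    field_simp
  · have key := (hf.mul hh).div (hg.pow 2) (pow_ne_zero 2 hL)
    rw [show L / 2 * L / L ^ 2 = 1 / 2 by field_simp] at key
    refine key.congr' (hne.mono fun x ⟨hx0, hgx⟩ => ?_)
    simp only [Pi.div_apply]
    field_simp

section

variable {V : ℝ → ℝ}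

theorem tendsto_div_deriv_and_mul_deriv_deriv_div_sq {l : Filter ℝ}
    (hl : l = 𝓝[>] 0 ∨ l = 𝓝[<] 0) {L : ℝ} (hL : L ≠ 0) (hV : ContDiff ℝ 1 V) (hV0 : V 0 = 0)
    (hV'0 : deriv V 0 = 0) (hV'' : ∀ x ≠ 0, HasDerivAt (deriv V) (deriv (deriv V) x) x)
    (hlim : Tendsto (deriv (deriv V)) l (𝓝 L)) :
    Tendsto (fun x => V x / deriv V x) l (𝓝 0) ∧
      Tendsto (fun x => V x * deriv (deriv V) x / deriv V x ^ 2) l (𝓝 (1 / 2)) := by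
  have hl0 : l ≤ 𝓝[≠] 0 := by
    rcases hl with rfl | rfl
    exacts [nhdsGT_le_nhdsNE 0, nhdsLT_le_nhdsNE 0]
  have hl0' : l ≤ 𝓝 0 := hl0.trans nhdsWithin_le_nhds
  have hV'_lim : Tendsto (fun x => deriv V x / x) l (𝓝 L) := by
    simpa using tendsto_div_pow_succ_of_deriv hl 0
      ((eventually_mem_nhdsWithin.filter_mono hl0).mono hV'')
      (hV'0 ▸ ((hV.continuous_deriv le_rfl).tendsto 0).mono_left hl0') (by simpa using hlim)
  have hV_lim : Tendsto (fun x => V x / x ^ 2) l (𝓝 (L / 2)) := by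
    simpa [one_add_one_eq_two] using tendsto_div_pow_succ_of_deriv hl 1
      (.of_forall fun x => (hV.differentiable one_ne_zero x).hasDerivAt)
      (hV0 ▸ (hV.continuous.tendsto 0).mono_left hl0') (by simpa using hV'_lim)
  exact tendsto_div_and_mul_div_sq_of_tendsto_div_pow hl0 hL hV_lim hV'_lim hlim

theorem tendsto_div_deriv_and_mul_deriv_deriv_div_sq_nhdsNE {Lp Lm : ℝ} (hLp : Lp ≠ 0)
    (hLm : Lm ≠ 0) (hV : ContDiff ℝ 1 V) (hV0 : V 0 = 0) (hV'0 : deriv V 0 = 0)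
    (hV'' : ∀ x ≠ 0, HasDerivAt (deriv V) (deriv (deriv V) x) x)
    (hp : Tendsto (deriv (deriv V)) (𝓝[>] 0) (𝓝 Lp))
    (hm : Tendsto (deriv (deriv V)) (𝓝[<] 0) (𝓝 Lm)) :
    Tendsto (fun x => V x / deriv V x) (𝓝[≠] 0) (𝓝 0) ∧
      Tendsto (fun x => V x * deriv (deriv V) x / deriv V x ^ 2) (𝓝[≠] 0) (𝓝 (1 / 2)) := by
  obtain ⟨hm₁, hm₂⟩ :=
    tendsto_div_deriv_and_mul_deriv_deriv_div_sq (.inr rfl) hLm hV hV0 hV'0 hV'' hm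
  obtain ⟨hp₁, hp₂⟩ :=
    tendsto_div_deriv_and_mul_deriv_deriv_div_sq (.inl rfl) hLp hV hV0 hV'0 hV'' hp
  rw [← nhdsLT_sup_nhdsGT]
  exact ⟨hm₁.sup hp₁, hm₂.sup hp₂⟩

theorem hasDerivAt_div_deriv {x : ℝ} (hV : DifferentiableAt ℝ V x)
    (hV' : HasDerivAt (deriv V) (deriv (deriv V) x) x) (hx : deriv V x ≠ 0) :
    HasDerivAt (fun y => V y / deriv V y) (1 - V x * deriv (deriv V) x / deriv V x ^ 2) x :=
  (hV.hasDerivAt.div hV' hx).congr_deriv (by field_simp)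

end

theorem W_is_C1_general
    (V : ℝ → ℝ) (Lp Lm : ℝ)
    (hC3 : ContDiffOn ℝ 3 V {0}ᶜ) (hC1 : ContDiff ℝ 1 V)
    (hV0 : V 0 = 0) (hV'0 : deriv V 0 = 0)
    (hV'' : ∀ x ≠ 0, 0 < deriv (deriv V) x)
    (hLp : 0 < Lp) (hLm : 0 < Lm)
    (h0p : Tendsto (deriv (deriv V)) (𝓝[>] 0) (𝓝 Lp))
    (h0m : Tendsto (deriv (deriv V)) (𝓝[<] 0) (𝓝 Lm))
    (W : ℝ → ℝ)
    (hW : ∀ x ≠ 0, W x = V x / deriv V x) (hW0 : W 0 = 0) :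
    ContDiff ℝ 1 W ∧ deriv W 0 = 1 / 2 := by
  have hV'C1 : ContDiffOn ℝ 1 (deriv V) {0}ᶜ :=
    hC3.deriv_of_isOpen isOpen_compl_singleton (by norm_num)
  have hV'_deriv : ∀ x ≠ 0, HasDerivAt (deriv V) (deriv (deriv V) x) x := fun x hx =>
    ((hV'C1.differentiableOn one_ne_zero).differentiableAt
      (isOpen_compl_singleton.mem_nhds hx)).hasDerivAt
  have hV'_ne : ∀ x ≠ 0, deriv V x ≠ 0 := fun x hx =>
    hV'0 ▸ (strictMono_of_deriv_pos_of_ne (hC1.continuous_deriv le_rfl) hV'').injective.ne hx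
  obtain ⟨hW_lim, hW'_lim⟩ := tendsto_div_deriv_and_mul_deriv_deriv_div_sq_nhdsNE
    hLp.ne' hLm.ne' hC1 hV0 hV'0 hV'_deriv h0p h0m
  refine contDiff_one_and_deriv_eq_of_tendsto_deriv
    (f' := fun x => 1 - V x * deriv (deriv V) x / deriv V x ^ 2) ?_ (fun x hx => ?_) ?_ ?_
  · rw [← continuousWithinAt_compl_self, ContinuousWithinAt, hW0]
    exact hW_lim.congr' (eventually_mem_nhdsWithin.mono fun x hx => (hW x hx).symm)
  · exact (hasDerivAt_div_deriv (hC1.differentiable one_ne_zero x) (hV'_deriv x hx)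
      (hV'_ne x hx)).congr_of_eventuallyEq
      (eventually_of_mem (isOpen_compl_singleton.mem_nhds hx) hW)
  · have hV''_cont := hV'C1.continuousOn_deriv_of_isOpen isOpen_compl_singleton le_rfl
    exact continuousOn_const.sub <| (hC1.continuous.continuousOn.mul hV''_cont).div
      ((hC1.continuous_deriv le_rfl).continuousOn.pow 2) fun x hx => pow_ne_zero 2 (hV'_ne x hx)
  · convert hW'_lim.const_sub 1 using 2
    norm_num

/-- W(x) = V(x)/V'(x) (with W(0)=0) is C¹ with W'(0) = 1/2. -/
theorem W_is_C1
    (V : ℝ → ℝ) (Lp Lm Mp Mm : ℝ)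
    (hC3 : ContDiffOn ℝ 3 V {0}ᶜ) (hC1 : ContDiff ℝ 1 V)
    (hV0 : V 0 = 0) (hV'0 : deriv V 0 = 0)
    (hV'' : ∀ x ≠ 0, 0 < deriv (deriv V) x)
    (hLp : 0 < Lp) (hLm : 0 < Lm)
    (h0p : Tendsto (deriv (deriv V)) (𝓝[>] 0) (𝓝 Lp))
    (h0m : Tendsto (deriv (deriv V)) (𝓝[<] 0) (𝓝 Lm))
    (h3p : Tendsto (iteratedDeriv 3 V) (𝓝[>] 0) (𝓝 Mp))
    (h3m : Tendsto (iteratedDeriv 3 V) (𝓝[<] 0) (𝓝 Mm))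
    (W : ℝ → ℝ)
    (hW : ∀ x ≠ 0, W x = V x / deriv V x) (hW0 : W 0 = 0) :
    ContDiff ℝ 1 W ∧ deriv W 0 = 1 / 2 :=
  W_is_C1_general V Lp Lm hC3 hC1 hV0 hV'0 hV'' hLp hLm h0p h0m W hW hW0
end

section
/- If g : ℝ → ℝ is C⁶, the limits g(±∞) = lim_{x→±∞} g(x) are finite, and x⁶ g^{(6)}(x) → 0 as |x| → ∞, then for every k with 1 ≤ k ≤ 6 one has x^k g^{(k)}(x) → 0 as |x| → ∞. -/
/-!
Taylor's formula at `x` with step `c x` and Lagrange remainder gives, for some `ξ ∈ (x, (1+c)x)`,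
`g((1+c)x) - g(x) = ∑_{k=1}^{5} c^k x^k g^{(k)}(x)/k! + c^6 x^6 g^{(6)}(ξ)/6!`.
As `x → ∞` the left side tends to `0` because `g` has a limit, and so does the remainder, since
`x^6 ≤ ξ^6` and `ξ^6 g^{(6)}(ξ) → 0`. Taking `c = 1, …, 5`, the vector of the
`x^k g^{(k)}(x)/k!` is sent to `0` by an invertible Vandermonde matrix, hence tends to `0`
itself. The case `x → -∞` follows by applying this to `x ↦ g(-x)`.
-/

open Filter Topology

open Matrix in
theorem tendsto_zero_of_forall_index_sum_pow_mul_tendsto_zero {K ι : Type*} [Field K]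
    [TopologicalSpace K] [IsTopologicalRing K] {n : ℕ} {v : Fin n → K}
    (hv : Function.Injective v) {u : ι → Fin n → K} {l : Filter ι}
    (hu : ∀ j, Tendsto (fun t => ∑ i : Fin n, v j ^ (i : ℕ) * u t i) l (𝓝 0)) :
    Tendsto u l (𝓝 0) := by
  set A := vandermonde v
  have hA : IsUnit A.det := (det_vandermonde_ne_zero_iff.mpr hv).isUnit
  have hAu : Tendsto (fun t => A *ᵥ u t) l (𝓝 0) := tendsto_pi_nhds.mpr hu
  have hcont : Continuous fun w : Fin n → K => A⁻¹ *ᵥ w :=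
    continuous_const.matrix_mulVec continuous_id
  simpa [Function.comp_def, mulVec_mulVec, nonsing_inv_mul A hA] using (hcont.tendsto 0).comp hAu

theorem exists_eq_sum_taylor_add_lagrange {f : ℝ → ℝ} {n : ℕ} (hf : ContDiff ℝ (n + 1) f)
    {x y : ℝ} (hxy : x < y) :
    ∃ ξ ∈ Set.Ioo x y, f y = ∑ k ∈ Finset.range (n + 1),
      iteratedDeriv k f x * (y - x) ^ k / k.factorial +
      iteratedDeriv (n + 1) f ξ * (y - x) ^ (n + 1) / (n + 1).factorial := by
  obtain ⟨ξ, hξ, h⟩ := taylor_mean_remainder_lagrange_iteratedDeriv hxy.ne hf.contDiffOn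
  rw [Set.uIoo_of_lt hxy] at hξ
  refine ⟨ξ, hξ, ?_⟩
  have hsum : taylorWithinEval f n (Set.uIcc x y) x y = ∑ k ∈ Finset.range (n + 1),
      iteratedDeriv k f x * (y - x) ^ k / k.factorial := by
    rw [taylor_within_apply]
    refine Finset.sum_congr rfl fun k hk => ?_
    have hkn : (k : WithTop ℕ∞) ≤ n + 1 := by
      exact_mod_cast (Finset.mem_range.mp hk).le
    rw [iteratedDerivWithin_eq_iteratedDeriv (uniqueDiffOn_uIcc hxy.ne)
      (hf.contDiffAt.of_le hkn) Set.left_mem_uIcc, smul_eq_mul]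
    ring
  linarith

theorem exists_eq_taylor_dilation {f : ℝ → ℝ} {m : ℕ} (hf : ContDiff ℝ (m + 1) f)
    {c x : ℝ} (hc : 0 < c) (hx : 0 < x) :
    ∃ ξ, x < ξ ∧ f ((1 + c) * x) = f x + c * ∑ i : Fin m,
      c ^ (i : ℕ) * (x ^ (i + 1 : ℕ) * iteratedDeriv (i + 1) f x / (i + 1 : ℕ).factorial) +
      iteratedDeriv (m + 1) f ξ * (c * x) ^ (m + 1) / (m + 1).factorial := by
  obtain ⟨ξ, hξ, h⟩ := exists_eq_sum_taylor_add_lagrange hf (by nlinarith : x < (1 + c) * x)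
  refine ⟨ξ, hξ.1, ?_⟩
  rw [h, show (1 + c) * x - x = c * x by ring, Finset.sum_range_succ',
    Fin.sum_univ_eq_sum_range
      (fun i => c ^ i * (x ^ (i + 1) * iteratedDeriv (i + 1) f x / (i + 1).factorial)),
    Finset.mul_sum]
  congr 1
  rw [add_comm]
  congr 1
  · simp
  · refine Finset.sum_congr rfl fun k _ => ?_
    ring

theorem abs_lagrange_remainder_le {a c x ξ : ℝ} (n : ℕ) (hc : 0 ≤ c) (hx : 0 ≤ x)
    (hxξ : x ≤ ξ) : |a * (c * x) ^ n / n.factorial| ≤ c ^ n / n.factorial * |ξ ^ n * a| := by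
  rw [abs_div, abs_mul, abs_mul, Nat.abs_cast, abs_of_nonneg (by positivity : 0 ≤ (c * x) ^ n),
    abs_of_nonneg (pow_nonneg (hx.trans hxξ) n), div_mul_eq_mul_div,
    div_le_div_iff_of_pos_right (by positivity), mul_pow]
  calc |a| * (c ^ n * x ^ n) = |a| * c ^ n * x ^ n := by ring
    _ ≤ |a| * c ^ n * ξ ^ n := by gcongr
    _ = c ^ n * (ξ ^ n * |a|) := by ring

theorem tendsto_sum_pow_mul_taylor_coeff_atTop {f : ℝ → ℝ} {L : ℝ} {m : ℕ}
    (hf : ContDiff ℝ (m + 1) f) (hL : Tendsto f atTop (𝓝 L))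
    (hm : Tendsto (fun x => x ^ (m + 1) * iteratedDeriv (m + 1) f x) atTop (𝓝 0))
    {c : ℝ} (hc : 0 < c) :
    Tendsto (fun x => ∑ i : Fin m,
      c ^ (i : ℕ) * (x ^ (i + 1 : ℕ) * iteratedDeriv (i + 1) f x / (i + 1 : ℕ).factorial))
      atTop (𝓝 0) := by
  choose! ξ hξ using fun x (hx : 0 < x) => exists_eq_taylor_dilation hf hc hx
  have hξ_atTop : Tendsto ξ atTop atTop :=
    tendsto_atTop_mono' _ ((eventually_gt_atTop 0).mono fun x hx => (hξ x hx).1.le) tendsto_id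
  set R := fun x => iteratedDeriv (m + 1) f (ξ x) * (c * x) ^ (m + 1) / (m + 1).factorial
  have hR : Tendsto R atTop (𝓝 0) := by
    have hbound := (hm.comp hξ_atTop).abs.const_mul (c ^ (m + 1) / (m + 1).factorial)
    refine squeeze_zero_norm' ?_ (by simpa only [abs_zero, mul_zero] using hbound)
    filter_upwards [eventually_gt_atTop 0] with x hx
    exact abs_lagrange_remainder_le (m + 1) hc.le hx.le (hξ x hx).1.le
  have hdil : Tendsto (fun x => (1 + c) * x) atTop atTop :=
    tendsto_id.const_mul_atTop (by linarith)
  have hexpansion := ((hL.comp hdil).sub hR).sub hL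
  replace hexpansion := hexpansion.div_const c
  rw [sub_zero, sub_self, zero_div] at hexpansion
  refine hexpansion.congr' ?_
  filter_upwards [eventually_gt_atTop 0] with x hx
  rw [Function.comp_apply, (hξ x hx).2, add_sub_cancel_right, add_sub_cancel_left,
    mul_div_cancel_left₀ _ hc.ne']

theorem tendsto_pow_mul_iteratedDeriv_atTop_s5 {f : ℝ → ℝ} {L : ℝ} {n : ℕ}
    (hf : ContDiff ℝ n f) (hL : Tendsto f atTop (𝓝 L))
    (hn : Tendsto (fun x => x ^ n * iteratedDeriv n f x) atTop (𝓝 0))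
    {k : ℕ} (hk : 1 ≤ k) (hkn : k ≤ n) :
    Tendsto (fun x => x ^ k * iteratedDeriv k f x) atTop (𝓝 0) := by
  obtain ⟨m, rfl⟩ : ∃ m, n = m + 1 := ⟨n - 1, by omega⟩
  rcases hkn.eq_or_lt with rfl | hkn
  · exact hn
  obtain ⟨i, rfl⟩ : ∃ i, k = i + 1 := ⟨k - 1, by omega⟩
  have hinj : Function.Injective fun j : Fin m => (j + 1 : ℝ) := by
    intro i j h
    exact Fin.ext (by simpa using h)
  have hcoeff := tendsto_pi_nhds.mp (tendsto_zero_of_forall_index_sum_pow_mul_tendsto_zero hinj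
    fun j => tendsto_sum_pow_mul_taylor_coeff_atTop (by exact_mod_cast hf) hL hn
      (by positivity : (0 : ℝ) < j + 1)) ⟨i, by omega⟩
  simpa [div_mul_cancel₀, Nat.factorial_ne_zero] using
    hcoeff.mul_const ((i + 1).factorial : ℝ)

theorem pow_mul_iteratedDeriv_comp_neg (f : ℝ → ℝ) (k : ℕ) (x : ℝ) :
    x ^ k * iteratedDeriv k (fun y => f (-y)) x = (-x) ^ k * iteratedDeriv k f (-x) := by
  rw [iteratedDeriv_comp_neg, smul_eq_mul, neg_pow]
  ring

theorem tendsto_pow_mul_iteratedDeriv_atBot {f : ℝ → ℝ} {L : ℝ} {n : ℕ}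
    (hf : ContDiff ℝ n f) (hL : Tendsto f atBot (𝓝 L))
    (hn : Tendsto (fun x => x ^ n * iteratedDeriv n f x) atBot (𝓝 0))
    {k : ℕ} (hk : 1 ≤ k) (hkn : k ≤ n) :
    Tendsto (fun x => x ^ k * iteratedDeriv k f x) atBot (𝓝 0) := by
  have hreflect : ∀ j, (fun x => x ^ j * iteratedDeriv j (fun y => f (-y)) x) =
      fun x => (fun y => y ^ j * iteratedDeriv j f y) (-x) :=
    fun j => funext (pow_mul_iteratedDeriv_comp_neg f j)
  rw [← tendsto_comp_neg_atTop_iff] at hL hn ⊢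
  rw [← hreflect] at hn ⊢
  exact tendsto_pow_mul_iteratedDeriv_atTop_s5 (hf.comp contDiff_neg) hL hn hk hkn

/-- decay of all derivatives of a bounded perturbation g. -/
theorem perturbation_derivatives_decay
    (g : ℝ → ℝ) (gp gm : ℝ)
    (hC6 : ContDiff ℝ 6 g)
    (hgp : Tendsto g atTop (𝓝 gp))
    (hgm : Tendsto g atBot (𝓝 gm))
    (h6top : Tendsto (fun x => x ^ 6 * iteratedDeriv 6 g x) atTop (𝓝 0))
    (h6bot : Tendsto (fun x => x ^ 6 * iteratedDeriv 6 g x) atBot (𝓝 0)) :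
    ∀ k : ℕ, 1 ≤ k → k ≤ 6 →
      Tendsto (fun x => x ^ k * iteratedDeriv k g x) atTop (𝓝 0) ∧
      Tendsto (fun x => x ^ k * iteratedDeriv k g x) atBot (𝓝 0) :=
  fun _ hk hk6 => ⟨tendsto_pow_mul_iteratedDeriv_atTop_s5 hC6 hgp h6top hk hk6,
    tendsto_pow_mul_iteratedDeriv_atBot hC6 hgm h6bot hk hk6⟩
end

section
/- Let C : ℝ → ℝ be the solution of x'' + a x⁺ - b x⁻ = 0 with C(0) = 1, C'(0) = 0. Then on [-π/(2√a), π/(2√a)], C(θ) = cos(√a θ), and on (π/(2√a), π/(2√a) + π/√b), C(θ) = -√(a/b) · sin(√b (θ - π/(2√a))). -/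
open Real Set

/-! The restoring force `a x⁺ - b x⁻` is Lipschitz, so solutions of the first-order system are
unique. While it stays nonnegative, `cos (√a θ)` solves the linear equation `x'' + a x = 0` and
hence the asymmetric one; this identifies `C` on `[-π/(2√a), π/(2√a)]`. At `π/(2√a)` the state is
`(0, -√a)`, and from there the nonpositive half-wave `-√(a/b) sin (√b (θ - π/(2√a)))` of
`x'' + b x = 0`, which starts from the same state, takes over for one half-period `π/√b`. -/

/-- `x'' + a x⁺ - b x⁻ = 0` as a first-order system in the phase plane `(x, x')`. -/
def asymOscField (a b : ℝ) (p : ℝ × ℝ) : ℝ × ℝ :=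
  (p.2, -(a * max p.1 0 - b * max (-p.1) 0))

theorem lipschitzWith_asymOscField (a b : ℝ) :
    LipschitzWith (max 1 (‖a‖₊ + ‖b‖₊)) (asymOscField a b) := by
  rw [← mul_one ‖a‖₊, ← mul_one ‖b‖₊]
  exact LipschitzWith.prod_snd.prodMk
    ((((lipschitzWith_smul a).comp (LipschitzWith.prod_fst.max_const 0)).sub
      ((lipschitzWith_smul b).comp (LipschitzWith.prod_fst.neg.max_const 0))).neg)

theorem ODE_solution_unique_autonomous_of_mem_Icc {E : Type*} [NormedAddCommGroup E]
    [NormedSpace ℝ E] {v : E → E} {K : NNReal} (hv : LipschitzWith K v) {f g : ℝ → E} {lo hi t₀ : ℝ}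
    (ht₀ : t₀ ∈ Icc lo hi) (hf : ∀ t ∈ Icc lo hi, HasDerivAt f (v (f t)) t)
    (hg : ∀ t ∈ Icc lo hi, HasDerivAt g (v (g t)) t) (heq : f t₀ = g t₀) :
    EqOn f g (Icc lo hi) := by
  have hfc := HasDerivAt.continuousOn hf
  have hgc := HasDerivAt.continuousOn hg
  rw [← Icc_union_Icc_eq_Icc ht₀.1 ht₀.2]
  refine EqOn.union ?_ ?_
  · have hsub : Icc lo t₀ ⊆ Icc lo hi := Icc_subset_Icc_right ht₀.2
    exact ODE_solution_unique_of_mem_Icc_left (v := fun _ => v) (s := fun _ => univ)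
      (fun _ _ => hv.lipschitzOnWith) (hfc.mono hsub)
      (fun t ht => (hf t (hsub (Ioc_subset_Icc_self ht))).hasDerivWithinAt) (fun _ _ => trivial)
      (hgc.mono hsub)
      (fun t ht => (hg t (hsub (Ioc_subset_Icc_self ht))).hasDerivWithinAt) (fun _ _ => trivial)
      heq
  · have hsub : Icc t₀ hi ⊆ Icc lo hi := Icc_subset_Icc_left ht₀.1
    exact ODE_solution_unique_of_mem_Icc_right (v := fun _ => v) (s := fun _ => univ)
      (fun _ _ => hv.lipschitzOnWith) (hfc.mono hsub)
      (fun t ht => (hf t (hsub (Ico_subset_Icc_self ht))).hasDerivWithinAt) (fun _ _ => trivial)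
      (hgc.mono hsub)
      (fun t ht => (hg t (hsub (Ico_subset_Icc_self ht))).hasDerivWithinAt) (fun _ _ => trivial)
      heq

noncomputable def cosWave (a θ : ℝ) : ℝ × ℝ :=
  (cos (√a * θ), -√a * sin (√a * θ))

noncomputable def negSinWave (b c θ₀ θ : ℝ) : ℝ × ℝ :=
  (-c * sin (√b * (θ - θ₀)), -(c * √b) * cos (√b * (θ - θ₀)))

theorem hasDerivAt_cosWave {a : ℝ} (ha : 0 ≤ a) (b : ℝ) {θ : ℝ} (hθ : 0 ≤ cos (√a * θ)) :
    HasDerivAt (cosWave a) (asymOscField a b (cosWave a θ)) θ := by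
  have hlin : HasDerivAt (fun θ => √a * θ) √a θ := by
    simpa using (hasDerivAt_id θ).const_mul √a
  have hfield : asymOscField a b (cosWave a θ) =
      (-sin (√a * θ) * √a, -√a * (cos (√a * θ) * √a)) := by
    simp only [asymOscField, cosWave, max_eq_left hθ, max_eq_right (neg_nonpos.mpr hθ),
      Prod.mk.injEq]
    constructor
    · ring
    · linear_combination cos (√a * θ) * sq_sqrt ha
  rw [hfield]
  exact hlin.cos.prodMk (hlin.sin.const_mul (-√a))

theorem hasDerivAt_negSinWave (a : ℝ) {b c : ℝ} (hb : 0 ≤ b) (hc : 0 ≤ c) (θ₀ : ℝ) {θ : ℝ}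
    (hθ : 0 ≤ sin (√b * (θ - θ₀))) :
    HasDerivAt (negSinWave b c θ₀) (asymOscField a b (negSinWave b c θ₀ θ)) θ := by
  have hlin : HasDerivAt (fun θ => √b * (θ - θ₀)) √b θ := by
    simpa using ((hasDerivAt_id θ).sub_const θ₀).const_mul √b
  have hx : 0 ≤ c * sin (√b * (θ - θ₀)) := mul_nonneg hc hθ
  have hfield : asymOscField a b (negSinWave b c θ₀ θ) =
      (-c * (cos (√b * (θ - θ₀)) * √b), -(c * √b) * (-sin (√b * (θ - θ₀)) * √b)) := by
    simp only [asymOscField, negSinWave, neg_mul, neg_neg, max_eq_left hx,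
      max_eq_right (neg_nonpos.mpr hx), Prod.mk.injEq]
    constructor
    · ring
    · linear_combination (-(c * sin (√b * (θ - θ₀)))) * sq_sqrt hb
  rw [hfield]
  exact (hlin.sin.const_mul (-c)).prodMk (hlin.cos.const_mul (-(c * √b)))

/-- explicit form of the asymmetric cosine C. -/
theorem asymmetric_cosine_formula
    (a b : ℝ) (ha : 0 < a) (hb : 0 < b)
    (C C' : ℝ → ℝ)
    (hC : ∀ θ, HasDerivAt C (C' θ) θ)
    (hC' : ∀ θ, HasDerivAt C'
      (-(a * max (C θ) 0 - b * max (-(C θ)) 0)) θ)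
    (hC0 : C 0 = 1) (hC'0 : C' 0 = 0) :
    (∀ θ ∈ Set.Icc (-(π / (2 * Real.sqrt a))) (π / (2 * Real.sqrt a)),
      C θ = Real.cos (Real.sqrt a * θ)) ∧
    (∀ θ ∈ Set.Ioo (π / (2 * Real.sqrt a))
        (π / (2 * Real.sqrt a) + π / Real.sqrt b),
      C θ = -Real.sqrt (a / b) *
        Real.sin (Real.sqrt b * (θ - π / (2 * Real.sqrt a)))) := by
  have hT : √a * (π / (2 * √a)) = π / 2 := by field_simp
  set T := π / (2 * √a)
  have hT0 : 0 ≤ T := by positivity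
  have hπb : √b * (π / √b) = π := by field_simp
  have hF : ∀ θ, HasDerivAt (fun θ => (C θ, C' θ)) (asymOscField a b (C θ, C' θ)) θ :=
    fun θ => (hC θ).prodMk (hC' θ)
  have hpos : EqOn (fun θ => (C θ, C' θ)) (cosWave a) (Icc (-T) T) := by
    refine ODE_solution_unique_autonomous_of_mem_Icc (lipschitzWith_asymOscField a b)
      ⟨by linarith, hT0⟩ (fun θ _ => hF θ) (fun θ hθ => hasDerivAt_cosWave ha.le b ?_) ?_
    · exact cos_nonneg_of_mem_Icc
        ⟨by nlinarith [hθ.1, sqrt_nonneg a], by nlinarith [hθ.2, sqrt_nonneg a]⟩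
    · simp [cosWave, hC0, hC'0]
  have hneg : EqOn (fun θ => (C θ, C' θ)) (negSinWave b √(a / b) T) (Icc T (T + π / √b)) := by
    refine ODE_solution_unique_autonomous_of_mem_Icc (lipschitzWith_asymOscField a b)
      (left_mem_Icc.mpr (le_add_of_nonneg_right (by positivity))) (fun θ _ => hF θ)
      (fun θ hθ => hasDerivAt_negSinWave a hb.le (sqrt_nonneg _) T ?_) ?_
    · exact sin_nonneg_of_nonneg_of_le_pi (by nlinarith [hθ.1, sqrt_nonneg b])
        (by nlinarith [hθ.2, sqrt_nonneg b])
    · rw [show (C T, C' T) = cosWave a T from hpos ⟨by linarith, le_rfl⟩]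
      simp [cosWave, negSinWave, hT, sqrt_div' a hb.le, (sqrt_pos.mpr hb).ne']
  exact ⟨fun θ hθ => congrArg Prod.fst (hpos hθ),
    fun θ hθ => congrArg Prod.fst (hneg (Ioo_subset_Icc_self hθ))⟩
end

section
/- Suppose Φ : ℝ → ℝ is C¹ with Φ'(x)/x → 0 as |x| → ∞ (and Φ' continuous). For λ > 0 let u_λ solve u'' + a u + λ^{-1} Φ'(λ u) = 0 with u(0) = 1, u'(0) = 0, where a > 0. Then u_λ(θ) → cos(√a θ) uniformly on compact intervals as λ → +∞. -/
/-!
Energy conservation for `u'' + a u + λ⁻¹ Φ'(λ u) = 0`, together with the subquadratic growth of `Φ`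
implied by `Φ'(x)/x → 0`, bounds `u_λ` uniformly for `λ ≥ 1`. Since `Φ'` grows sublinearly, the
forcing term `λ⁻¹ Φ'(λ u_λ)` then tends to `0` uniformly, and Grönwall's inequality for the
first-order system satisfied by `(u_λ - cos (√a θ), u_λ' + √a sin (√a θ))` turns this into uniform
convergence on bounded intervals.
-/
open Real Filter Topology Set

theorem Asymptotics.IsLittleO.exists_norm_le_mul_add {X E F : Type*} [TopologicalSpace X]
    [SeminormedAddGroup E] [SeminormedAddGroup F] {f : X → E} {g : X → F} (h : f =o[cocompact X] g)
    (hf : Continuous f) {ε : ℝ} (hε : 0 < ε) : ∃ C, ∀ x, ‖f x‖ ≤ ε * ‖g x‖ + C := by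
  obtain ⟨t, ht, hbound⟩ := mem_cocompact.mp (h.bound hε)
  obtain ⟨C, hC⟩ := ht.exists_bound_of_continuousOn hf.continuousOn
  refine ⟨max C 0, fun x => ?_⟩
  have hg : 0 ≤ ε * ‖g x‖ := mul_nonneg hε.le (norm_nonneg _)
  by_cases hx : x ∈ t
  · linarith [hC x hx, le_max_left C 0]
  · have : ‖f x‖ ≤ ε * ‖g x‖ := hbound hx
    linarith [le_max_right C 0]

theorem isLittleO_cocompact_id_of_tendsto_div {f : ℝ → ℝ}
    (htop : Tendsto (fun x => f x / x) atTop (𝓝 0))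
    (hbot : Tendsto (fun x => f x / x) atBot (𝓝 0)) : f =o[cocompact ℝ] id := by
  rw [cocompact_eq_atBot_atTop]
  refine .sup ((Asymptotics.isLittleO_iff_tendsto' ?_).mpr hbot)
    ((Asymptotics.isLittleO_iff_tendsto' ?_).mpr htop)
  · exact (eventually_ne_atBot 0).mono fun x hx h => absurd h hx
  · exact (eventually_ne_atTop 0).mono fun x hx h => absurd h hx

theorem exists_abs_le_mul_sq_add_of_hasDerivAt {f f' : ℝ → ℝ} (hf : ∀ x, HasDerivAt f (f' x) x)
    (hf' : ∀ ε > 0, ∃ C, ∀ x, |f' x| ≤ ε * |x| + C) {ε : ℝ} (hε : 0 < ε) :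
    ∃ D, ∀ x, |f x| ≤ ε * x ^ 2 + D := by
  obtain ⟨C, hC⟩ := hf' (ε / 2) (half_pos hε)
  refine ⟨|f 0| + C ^ 2 / (2 * ε), fun x => ?_⟩
  have hmvt : |f x - f 0| ≤ (ε / 2 * |x| + C) * |x| := by
    have := (convex_closedBall (0 : ℝ) |x|).norm_image_sub_le_of_norm_hasDerivWithin_le
      (C := ε / 2 * |x| + C) (fun y _ => (hf y).hasDerivWithinAt) (fun y hy => ?_)
      (Metric.mem_closedBall_self (abs_nonneg x)) (by simp : x ∈ Metric.closedBall 0 |x|)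
    · simpa using this
    · have hy : |y| ≤ |x| := by simpa using hy
      calc ‖f' y‖ ≤ ε / 2 * |y| + C := hC y
        _ ≤ ε / 2 * |x| + C := by gcongr
  -- `C |x| ≤ ε x² / 2 + C² / (2ε)` is AM-GM
  have hamgm : 0 ≤ (ε * |x| - C) ^ 2 / (2 * ε) := by positivity
  have hsq : |x| ^ 2 = x ^ 2 := sq_abs x
  have hexpand : (ε * |x| - C) ^ 2 / (2 * ε) = ε / 2 * x ^ 2 - C * |x| + C ^ 2 / (2 * ε) := by
    field_simp; rw [← hsq]; ring
  have htriangle := abs_sub_abs_le_abs_sub (f x) (f 0)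
  nlinarith

theorem energy_eq_of_hasDerivAt {V V' u u' : ℝ → ℝ} (hV : ∀ y, HasDerivAt V (V' y) y)
    (hu : ∀ t, HasDerivAt u (u' t) t) (hu' : ∀ t, HasDerivAt u' (-V' (u t)) t) (t : ℝ) :
    u' t ^ 2 / 2 + V (u t) = u' 0 ^ 2 / 2 + V (u 0) := by
  have hE : ∀ t, HasDerivAt (fun t => u' t ^ 2 / 2 + V (u t)) 0 t := fun t =>
    ((((hu' t).pow 2).div_const 2).add ((hV (u t)).comp t (hu t))).congr_deriv (by ring)
  exact is_const_of_deriv_eq_zero (fun t => (hE t).differentiableAt) (fun t => (hE t).deriv) t 0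

theorem sq_le_of_subquadratic_potential {a lam D : ℝ} {Φ φ u u' : ℝ → ℝ} (ha : 0 < a)
    (hlam : 1 ≤ lam) (hΦ : ∀ x, HasDerivAt Φ (φ x) x) (hΦD : ∀ x, |Φ x| ≤ a / 4 * x ^ 2 + D)
    (hu : ∀ θ, HasDerivAt u (u' θ) θ)
    (hu' : ∀ θ, HasDerivAt u' (-(a * u θ + lam⁻¹ * φ (lam * u θ))) θ)
    (hu0 : u 0 = 1) (hu'0 : u' 0 = 0) (θ : ℝ) : u θ ^ 2 ≤ 3 + 8 * D / a := by
  have hlam0 : lam ≠ 0 := by positivity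
  have hV : ∀ y, HasDerivAt (fun y => a / 2 * y ^ 2 + lam⁻¹ ^ 2 * Φ (lam * y))
      (a * y + lam⁻¹ * φ (lam * y)) y := fun y => by
    have hcomp := (hΦ (lam * y)).comp y ((hasDerivAt_id y).const_mul lam)
    refine (((hasDerivAt_pow 2 y).const_mul (a / 2)).add
      (hcomp.const_mul (lam⁻¹ ^ 2))).congr_deriv ?_
    field_simp
    ring
  have henergy := energy_eq_of_hasDerivAt hV hu hu' θ
  simp only [hu0, hu'0, mul_one] at henergy
  have hΦlam := (abs_le.mp (hΦD lam)).2
  have hΦu := (abs_le.mp (hΦD (lam * u θ))).1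
  have hD : 0 ≤ D := by simpa using (abs_nonneg _).trans (hΦD 0)
  have hinv : lam⁻¹ ^ 2 ≤ 1 := pow_le_one₀ (by positivity) (inv_le_one_of_one_le₀ hlam)
  have hscale : ∀ x, lam⁻¹ ^ 2 * (lam * x) ^ 2 = x ^ 2 := fun x => by field_simp
  have : a / 4 * u θ ^ 2 ≤ 3 * a / 4 + 2 * D * lam⁻¹ ^ 2 := by
    nlinarith [sq_nonneg (u' θ), hscale 1, hscale (u θ), sq_nonneg lam⁻¹]
  suffices u θ ^ 2 - 3 ≤ 8 * D / a by linarith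
  rw [le_div_iff₀ ha]
  nlinarith

theorem tendstoUniformly_inv_mul_comp_mul {α : Type*} {f : ℝ → ℝ}
    (hf : ∀ ε > 0, ∃ C, ∀ x, |f x| ≤ ε * |x| + C) {y : ℝ → α → ℝ} {M : ℝ}
    (hy : ∀ᶠ lam in atTop, ∀ i, |y lam i| ≤ M) :
    TendstoUniformly (fun lam i => lam⁻¹ * f (lam * y lam i)) 0 atTop := by
  rw [Metric.tendstoUniformly_iff]
  intro δ hδ
  have hε : 0 < δ / (2 * (|M| + 1)) := by positivity
  obtain ⟨C, hC⟩ := hf _ hε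
  have hCinv : Tendsto (fun lam : ℝ => C * lam⁻¹) atTop (𝓝 0) := by
    simpa using tendsto_inv_atTop_zero.const_mul C
  filter_upwards [hy, eventually_gt_atTop 0, hCinv.eventually (gt_mem_nhds (half_pos hδ))]
    with lam hyM hlam hClam i
  have hεM : δ / (2 * (|M| + 1)) * |y lam i| < δ / 2 := by
    calc δ / (2 * (|M| + 1)) * |y lam i| ≤ δ / (2 * (|M| + 1)) * |M| :=
          mul_le_mul_of_nonneg_left ((hyM i).trans (le_abs_self M)) hε.le
      _ < δ / 2 := by
          rw [div_mul_eq_mul_div, div_lt_div_iff₀ (by positivity) two_pos]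
          nlinarith [abs_nonneg M]
  calc dist (0 : ℝ) (lam⁻¹ * f (lam * y lam i)) = lam⁻¹ * |f (lam * y lam i)| := by
        rw [dist_zero_left, Real.norm_eq_abs, abs_mul, abs_of_pos (inv_pos.mpr hlam)]
    _ ≤ lam⁻¹ * (δ / (2 * (|M| + 1)) * |lam * y lam i| + C) := by gcongr; exact hC _
    _ = δ / (2 * (|M| + 1)) * |y lam i| + C * lam⁻¹ := by
        rw [abs_mul, abs_of_pos hlam]; field_simp
    _ < δ := by linarith

theorem norm_le_gronwallBound_abs {E : Type*} [NormedAddCommGroup E] [NormedSpace ℝ E]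
    {f f' : ℝ → E} {K ε : ℝ} (hf : ∀ t, HasDerivAt f (f' t) t)
    (bound : ∀ t, ‖f' t‖ ≤ K * ‖f t‖ + ε) (t : ℝ) :
    ‖f t‖ ≤ gronwallBound ‖f 0‖ K ε |t| := by
  wlog ht : 0 ≤ t generalizing f f' t
  · have hneg : ∀ s, HasDerivAt (fun s => f (-s)) (-f' (-s)) s := fun s => by
      have := (hf (-s)).scomp s (hasDerivAt_neg s)
      rwa [neg_one_smul] at this
    simpa using this hneg (fun s => by simpa using bound (-s)) (-t) (by linarith)
  simpa only [sub_zero, abs_of_nonneg ht] using norm_le_gronwallBound_of_norm_deriv_right_le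
    (fun s _ => (hf s).continuousAt.continuousWithinAt)
    (fun s _ => (hf s).hasDerivWithinAt) le_rfl (fun s _ => bound s) t ⟨ht, le_rfl⟩

theorem abs_sub_cos_le_gronwallBound {a δ : ℝ} (ha : 0 ≤ a) {u u' g : ℝ → ℝ}
    (hu : ∀ θ, HasDerivAt u (u' θ) θ) (hu' : ∀ θ, HasDerivAt u' (-(a * u θ + g θ)) θ)
    (hu0 : u 0 = 1) (hu'0 : u' 0 = 0) (hg : ∀ θ, |g θ| ≤ δ) (θ : ℝ) :
    |u θ - cos (√a * θ)| ≤ gronwallBound 0 (max 1 a) δ |θ| := by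
  have hsa : √a * √a = a := mul_self_sqrt ha
  set f : ℝ → ℝ × ℝ := fun θ => (u θ - cos (√a * θ), u' θ + √a * sin (√a * θ))
  have hf : ∀ θ, HasDerivAt f ((f θ).2, -(a * (f θ).1) - g θ) θ := fun θ => by
    have hlin : HasDerivAt (√a * ·) √a θ := by simpa using (hasDerivAt_id θ).const_mul √a
    have h1 : HasDerivAt (fun θ => u θ - cos (√a * θ)) (u' θ + √a * sin (√a * θ)) θ :=
      ((hu θ).sub ((hasDerivAt_cos _).comp θ hlin)).congr_deriv (by ring)
    have h2 : HasDerivAt (fun θ => u' θ + √a * sin (√a * θ))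
        (-(a * (u θ - cos (√a * θ))) - g θ) θ :=
      ((hu' θ).add (((hasDerivAt_sin _).comp θ hlin).const_mul √a)).congr_deriv
        (by linear_combination cos (√a * θ) * hsa)
    exact h1.prodMk h2
  have bound : ∀ θ, ‖((f θ).2, -(a * (f θ).1) - g θ)‖ ≤ max 1 a * ‖f θ‖ + δ := fun θ => by
    have h1 : |(f θ).1| ≤ ‖f θ‖ := norm_fst_le (f θ)
    have h2 : |(f θ).2| ≤ ‖f θ‖ := norm_snd_le (f θ)
    have hnorm : 0 ≤ ‖f θ‖ := norm_nonneg _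
    have hδ : 0 ≤ δ := (abs_nonneg _).trans (hg 0)
    rw [Prod.norm_def, Real.norm_eq_abs, Real.norm_eq_abs]
    refine max_le ?_ ?_
    · nlinarith [le_max_left 1 a]
    · calc |-(a * (f θ).1) - g θ| ≤ a * |(f θ).1| + |g θ| := by
            simpa only [abs_neg, abs_mul, abs_of_nonneg ha] using abs_sub (-(a * (f θ).1)) (g θ)
        _ ≤ max 1 a * ‖f θ‖ + δ := by nlinarith [le_max_right 1 a, hg θ]
  have hf0 : f 0 = 0 := by simp [f, hu0, hu'0]
  simpa [hf0] using (norm_fst_le (f θ)).trans (norm_le_gronwallBound_abs hf bound θ)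

theorem tendstoUniformlyOn_cos_of_tendstoUniformly_forcing {ι : Type*} {l : Filter ι} {a : ℝ}
    (ha : 0 ≤ a) {u u' g : ι → ℝ → ℝ} (hg : TendstoUniformly g 0 l)
    (hsol : ∀ᶠ i in l, (∀ θ, HasDerivAt (u i) (u' i θ) θ) ∧
      (∀ θ, HasDerivAt (u' i) (-(a * u i θ + g i θ)) θ) ∧ u i 0 = 1 ∧ u' i 0 = 0)
    {K : Set ℝ} (hK : IsCompact K) : TendstoUniformlyOn u (fun θ => cos (√a * θ)) l K := by
  rw [Metric.tendstoUniformlyOn_iff]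
  intro ε hε
  obtain ⟨T, hT⟩ := hK.isBounded.subset_closedBall 0
  have hgb : Tendsto (fun δ => gronwallBound 0 (max 1 a) δ T) (𝓝 0) (𝓝 0) := by
    simpa only [gronwallBound_ε0_δ0] using (gronwallBound_continuous_ε 0 (max 1 a) T).tendsto 0
  obtain ⟨δ, hδε, hδ⟩ := ((hgb.eventually (gt_mem_nhds hε)).filter_mono nhdsWithin_le_nhds
    |>.and (self_mem_nhdsWithin : Ioi (0 : ℝ) ∈ 𝓝[>] 0)).exists
  filter_upwards [Metric.tendstoUniformly_iff.mp hg δ hδ, hsol]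
    with i hgi ⟨hu, hu', hu0, hu'0⟩ θ hθ
  have hθT : |θ| ≤ T := by simpa using hT hθ
  calc dist (cos (√a * θ)) (u i θ) = |u i θ - cos (√a * θ)| := dist_comm _ _
    _ ≤ gronwallBound 0 (max 1 a) δ |θ| := abs_sub_cos_le_gronwallBound ha hu hu' hu0 hu'0
        (fun θ => by simpa using (hgi θ).le) θ
    _ ≤ gronwallBound 0 (max 1 a) δ T :=
        gronwallBound_mono le_rfl (le_of_lt hδ) (by positivity) hθT
    _ < ε := hδε

/-- rescaled solutions converge uniformly on compacts to cos(√a θ). -/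
theorem rescaled_solutions_converge
    (a : ℝ) (ha : 0 < a)
    (Φ : ℝ → ℝ) (hΦ : ContDiff ℝ 1 Φ)
    (hΦtop : Tendsto (fun x => deriv Φ x / x) atTop (𝓝 0))
    (hΦbot : Tendsto (fun x => deriv Φ x / x) atBot (𝓝 0))
    (u u' : ℝ → ℝ → ℝ)
    (hu : ∀ lam > (0:ℝ), ∀ θ : ℝ, HasDerivAt (u lam) (u' lam θ) θ)
    (hu' : ∀ lam > (0:ℝ), ∀ θ : ℝ, HasDerivAt (u' lam)
      (-(a * u lam θ + lam⁻¹ * deriv Φ (lam * u lam θ))) θ)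
    (hu0 : ∀ lam > (0:ℝ), u lam 0 = 1) (hu'0 : ∀ lam > (0:ℝ), u' lam 0 = 0) :
    ∀ K : Set ℝ, IsCompact K →
      TendstoUniformlyOn (fun lam θ => u lam θ)
        (fun θ => Real.cos (Real.sqrt a * θ)) atTop K := by
  intro K hK
  have hdΦ : ∀ x, HasDerivAt Φ (deriv Φ x) x := fun x =>
    (hΦ.differentiable one_ne_zero x).hasDerivAt
  have hsublinear : ∀ ε > 0, ∃ C, ∀ x, |deriv Φ x| ≤ ε * |x| + C := fun ε hε =>
    (isLittleO_cocompact_id_of_tendsto_div hΦtop hΦbot).exists_norm_le_mul_add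
      (hΦ.continuous_deriv le_rfl) hε
  obtain ⟨D, hD⟩ :=
    exists_abs_le_mul_sq_add_of_hasDerivAt hdΦ hsublinear (by positivity : 0 < a / 4)
  have hbounded : ∀ᶠ lam in atTop, ∀ θ, |u lam θ| ≤ √(3 + 8 * D / a) :=
    (eventually_ge_atTop 1).mono fun lam hlam θ => abs_le_sqrt <|
      have hlam0 : 0 < lam := one_pos.trans_le hlam
      sq_le_of_subquadratic_potential ha hlam hdΦ hD (hu lam hlam0) (hu' lam hlam0)
        (hu0 lam hlam0) (hu'0 lam hlam0) θ
  exact tendstoUniformlyOn_cos_of_tendstoUniformly_forcing ha.le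
    (tendstoUniformly_inv_mul_comp_mul hsublinear hbounded)
    ((eventually_gt_atTop 0).mono fun lam hlam =>
      ⟨hu lam hlam, hu' lam hlam, hu0 lam hlam, hu'0 lam hlam⟩) hK
end
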